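/- arXiv:2406.16719 — 2 statements merged into one kernel-verified Lean document; each statement's English description precedes it below -/
import Mathlib

section
/- Let V(F, M_s) := (ρ/2)F² + (1/2)(M_s - M_s*(F))². Suppose (F(t), M_s(t)) solves F' = g(F, M_s) - δ_F F, M_s' = u*(F, M_s) - δ_s M_s with the backstepping controller u*(F,M_s) := (δ_s - η)M_s + η M_s*(F) - ρπ(F,M_s) + (dM_s*/dF)(F)(g(F,M_s) - δ_F F), for gains ρ, η > 0. Then along solutions remaining in [0,∞)², d/dt V(F(t), M_s(t)) = -ρ(δ_F - ε)F² - η(M_s - M_s*(F))². -/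
noncomputable def gfun (bE nE dE dM gs k nu : ℝ) (F Ms : ℝ) : ℝ :=
  if 0 < F then
    nu * (1 - nu) * bE ^ 2 * nE ^ 2 * F ^ 2 /
      ((bE * F / k + nE + dE) *
        ((1 - nu) * nE * bE * F + (bE * F / k + nE + dE) * dM * gs * Ms))
  else 0

noncomputable def Mstar (bE nE dE dM gs k nu Fhat : ℝ) (F : ℝ) : ℝ :=
  (1 - nu) * nE * bE ^ 2 * k * F * (Fhat - F) /
    (gs * dM * (bE * F + k * (nE + dE)) ^ 2)

noncomputable def pifun (bE nE dE dM gs k nu Fhat : ℝ) (F Ms : ℝ) : ℝ :=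
  if Ms = Mstar bE nE dE dM gs k nu Fhat F then
    deriv (fun m => gfun bE nE dE dM gs k nu F m) Ms * F
  else
    (gfun bE nE dE dM gs k nu F Ms -
      nu * k * bE * nE / (nE * k + Fhat * bE + dE * k) * F) /
      (Ms - Mstar bE nE dE dM gs k nu Fhat F) * F

noncomputable def ustar (bE nE dE dM dF ds gs k nu Fhat rho eta : ℝ) (F Ms : ℝ) : ℝ :=
  (ds - eta) * Ms + eta * Mstar bE nE dE dM gs k nu Fhat F -
    rho * pifun bE nE dE dM gs k nu Fhat F Ms +
    deriv (Mstar bE nE dE dM gs k nu Fhat) F *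
      (gfun bE nE dE dM gs k nu F Ms - dF * F)

lemma key (bE nE dE dM gs k nu Fhat : ℝ)
    (hbE : 0 < bE) (hnE : 0 < nE) (hdE : 0 < dE) (hdM : 0 < dM)
    (hgs : 0 < gs) (hk : 0 < k) (hnu : nu ∈ Set.Ioo (0:ℝ) 1) (hFhat : 0 < Fhat)
    (x : ℝ) (hx : 0 ≤ x) :
    gfun bE nE dE dM gs k nu x (Mstar bE nE dE dM gs k nu Fhat x) =
      nu * k * bE * nE / (nE * k + Fhat * bE + dE * k) * x := by
  rcases hx.eq_or_lt with h0 | h0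
  · simp [gfun, ← h0]
  · unfold gfun
    rw [if_pos h0]
    have hD : (0:ℝ) < bE * x + k * (nE + dE) := by positivity
    have hS : (0:ℝ) < nE * k + Fhat * bE + dE * k := by positivity
    have hnu1 : (0:ℝ) < 1 - nu := by linarith [hnu.2]
    have hinner : (1 - nu) * nE * bE * x +
        (bE * x / k + nE + dE) * dM * gs * Mstar bE nE dE dM gs k nu Fhat x =
        (1 - nu) * nE * bE * x * (nE * k + Fhat * bE + dE * k) / (bE * x + k * (nE + dE)) := by
      unfold Mstar
      field_simp
      ring
    rw [hinner]
    rw [div_eq_iff]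
    · field_simp
      ring
    · have h1 : (0:ℝ) < (1 - nu) * nE * bE * x * (nE * k + Fhat * bE + dE * k) / (bE * x + k * (nE + dE)) := by positivity
      positivity

theorem stmt_13 (bE nE dE dM dF ds gs k nu Fhat rho eta : ℝ)
    (hbE : 0 < bE) (hnE : 0 < nE) (hdE : 0 < dE) (hdM : 0 < dM)
    (hdF : 0 < dF) (hds : 0 < ds) (hgs : 0 < gs) (hk : 0 < k)
    (hnu : nu ∈ Set.Ioo (0:ℝ) 1) (hFhat : 0 < Fhat)
    (hrho : 0 < rho) (heta : 0 < eta)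
    (F Ms : ℝ → ℝ)
    (hF : ∀ t : ℝ, HasDerivAt F
      (gfun bE nE dE dM gs k nu (F t) (Ms t) - dF * F t) t)
    (hMs : ∀ t : ℝ, HasDerivAt Ms
      (ustar bE nE dE dM dF ds gs k nu Fhat rho eta (F t) (Ms t) - ds * Ms t) t)
    (hpos : ∀ t : ℝ, 0 ≤ F t ∧ 0 ≤ Ms t) :
    ∀ t : ℝ,
      deriv (fun s => rho / 2 * (F s) ^ 2 +
        (1 / 2) * (Ms s - Mstar bE nE dE dM gs k nu Fhat (F s)) ^ 2) t =
      -(rho * (dF - nu * k * bE * nE / (nE * k + Fhat * bE + dE * k)) * (F t) ^ 2) -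
        eta * (Ms t - Mstar bE nE dE dM gs k nu Fhat (F t)) ^ 2 := by
  intro t
  have hFt : 0 ≤ F t := (hpos t).1
  set G := gfun bE nE dE dM gs k nu (F t) (Ms t) with hG
  set m := Mstar bE nE dE dM gs k nu Fhat with hm
  set m' := deriv m (F t) with hm'
  -- differentiability of Mstar at F t
  have hden : gs * dM * (bE * (F t) + k * (nE + dE)) ^ 2 ≠ 0 := by positivity
  have hMd : DifferentiableAt ℝ m (F t) := by
    have : m = fun x => ((1 - nu) * nE * bE ^ 2 * k * x * (Fhat - x)) /
        (gs * dM * (bE * x + k * (nE + dE)) ^ 2) := by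
      funext x; simp [hm, Mstar]
    rw [this]
    exact DifferentiableAt.div (by fun_prop) (by fun_prop) hden
  have hMder : HasDerivAt m m' (F t) := hMd.hasDerivAt
  have hcomp : HasDerivAt (fun s => m (F s)) (m' * (G - dF * F t)) t :=
    hMder.comp t (hF t)
  have hV : HasDerivAt (fun s => rho / 2 * (F s) ^ 2 +
      (1 / 2) * (Ms s - m (F s)) ^ 2)
      (rho / 2 * (2 * F t ^ 1 * (G - dF * F t)) +
        (1 / 2) * (2 * (Ms t - m (F t)) ^ 1 *
          ((ustar bE nE dE dM dF ds gs k nu Fhat rho eta (F t) (Ms t) - ds * Ms t)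
            - m' * (G - dF * F t)))) t := by
    exact (((hF t).pow 2).const_mul (rho / 2)).add
      ((((hMs t).sub hcomp).pow 2).const_mul (1 / 2))
  rw [hV.deriv]
  -- expand ustar
  set e := Ms t - m (F t) with he
  set eps := nu * k * bE * nE / (nE * k + Fhat * bE + dE * k) with heps
  have hust : ustar bE nE dE dM dF ds gs k nu Fhat rho eta (F t) (Ms t) - ds * Ms t
      - m' * (G - dF * F t)
      = -eta * e - rho * pifun bE nE dE dM gs k nu Fhat (F t) (Ms t) := by
    simp only [ustar, he, hm, ← hG, ← hm']
    ring
  rw [hust]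
  by_cases hcase : Ms t = Mstar bE nE dE dM gs k nu Fhat (F t)
  · have he0 : e = 0 := by rw [he, hcase, hm, sub_self]
    have hGval : G = eps * F t := by
      rw [hG, hcase, heps]
      exact key bE nE dE dM gs k nu Fhat hbE hnE hdE hdM hgs hk hnu hFhat _ hFt
    rw [he0, hGval]
    ring
  · have hne : e ≠ 0 := by
      rw [he, hm]; exact sub_ne_zero_of_ne hcase
    have hpi : pifun bE nE dE dM gs k nu Fhat (F t) (Ms t) =
        (G - eps * F t) / e * F t := by
      rw [pifun, if_neg hcase, ← hG, ← heps, he, hm]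
    rw [hpi]
    field_simp
    ring
end

section
/- Suppose η ∈ (δ_F, δ_s). Then the modified backstepping controller u₊*(F, M_s) := (δ_s - η)M_s + η M_s*(F) - ρπ(F, M_s) + cut₂((dM_s*/dF)(F), g(F,M_s) - δ_F F) satisfies u₊*(F, M_s) ≥ 0 for all (F, M_s) ∈ [0, F̂] × [0, ∞). -/
noncomputable def cut2 (x y : ℝ) : ℝ := if x < 0 ∧ 0 < y then 0 else x * y

lemma neg_mul_le_cut2 {x y c F m : ℝ} (hc : 0 ≤ c) (hm : 0 ≤ m) (hy : -(c * F) ≤ y)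
    (hxF : x * F ≤ m) : -(c * m) ≤ cut2 x y := by
  unfold cut2
  split_ifs with hcut
  · linarith [mul_nonneg hc hm]
  · rcases lt_or_ge x 0 with hx | hx
    · have hy' : y ≤ 0 := by by_contra! hy'; exact hcut ⟨hx, hy'⟩
      nlinarith
    · nlinarith [mul_le_mul_of_nonneg_left hy hx, mul_le_mul_of_nonneg_left hxF hc]

lemma deriv_const_div_mul_affine_nonpos {a b c d m : ℝ} (hc : 0 ≤ c) (hd : 0 ≤ d)
    (hb : 0 ≤ b) (hm : d * (a + b * m) ≠ 0) : deriv (fun m => c / (d * (a + b * m))) m ≤ 0 := by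
  have hlin : HasDerivAt (fun m => d * (a + b * m)) (d * b) m := by
    simpa using ((hasDerivAt_id m).const_mul b |>.const_add a).const_mul d
  have hquot : HasDerivAt (fun m => c / (d * (a + b * m))) ((0 * (d * (a + b * m)) - c * (d * b))
      / (d * (a + b * m)) ^ 2) m := (hasDerivAt_const m c).div hlin hm
  rw [hquot.deriv]
  apply div_nonpos_of_nonpos_of_nonneg _ (sq_nonneg _)
  nlinarith [mul_nonneg hc (mul_nonneg hd hb)]

section Model

variable {bE nE dE dM gs k nu Fhat : ℝ}

lemma gfun_nonneg (hbE : 0 < bE) (hnE : 0 < nE) (hdE : 0 < dE) (hdM : 0 < dM) (hgs : 0 < gs)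
    (hk : 0 < k) (hnu : nu ∈ Set.Ioo (0:ℝ) 1) {F Ms : ℝ} (hMs : 0 ≤ Ms) :
    0 ≤ gfun bE nE dE dM gs k nu F Ms := by
  have := hnu.1; have := sub_pos.2 hnu.2
  unfold gfun
  split_ifs
  · positivity
  · rfl

lemma Mstar_nonneg (hnE : 0 < nE) (hdM : 0 < dM) (hgs : 0 < gs) (hk : 0 < k) (hnu : nu < 1)
    {F : ℝ} (hF : F ∈ Set.Icc 0 Fhat) :
    0 ≤ Mstar bE nE dE dM gs k nu Fhat F := by
  have := sub_pos.2 hnu; have := hF.1; have := sub_nonneg.2 hF.2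
  unfold Mstar
  positivity

lemma hasDerivAt_Mstar (hbE : 0 < bE) (hnE : 0 < nE) (hdE : 0 < dE) (hdM : 0 < dM)
    (hgs : 0 < gs) (hk : 0 < k) {F : ℝ} (hF : 0 ≤ F) :
    HasDerivAt (Mstar bE nE dE dM gs k nu Fhat)
      (((1 - nu) * nE * bE ^ 2 * k * (Fhat - 2 * F) * (gs * dM * (bE * F + k * (nE + dE)) ^ 2)
        - (1 - nu) * nE * bE ^ 2 * k * F * (Fhat - F) *
          (gs * dM * (2 * (bE * F + k * (nE + dE)) * bE))) /
      (gs * dM * (bE * F + k * (nE + dE)) ^ 2) ^ 2) F := by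
  have hx := hasDerivAt_id F
  have hnum : HasDerivAt (fun x => (1 - nu) * nE * bE ^ 2 * k * x * (Fhat - x))
      ((1 - nu) * nE * bE ^ 2 * k * (Fhat - 2 * F)) F :=
    ((hx.const_mul _).mul ((hasDerivAt_const F Fhat).sub hx)).congr_deriv
      (by simp only [mul_one, Pi.sub_apply, id_eq, zero_sub, mul_neg]; ring)
  have hden : HasDerivAt (fun x => gs * dM * (bE * x + k * (nE + dE)) ^ 2)
      (gs * dM * (2 * (bE * F + k * (nE + dE)) * bE)) F :=
    ((((hx.const_mul bE).add_const _).pow 2).const_mul _).congr_deriv (by simp)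
  exact hnum.div hden (by positivity)

lemma deriv_Mstar_mul_le (hbE : 0 < bE) (hnE : 0 < nE) (hdE : 0 < dE) (hdM : 0 < dM)
    (hgs : 0 < gs) (hk : 0 < k) (hnu : nu < 1) {F : ℝ} (hF : F ∈ Set.Icc 0 Fhat) :
    deriv (Mstar bE nE dE dM gs k nu Fhat) F * F ≤ Mstar bE nE dE dM gs k nu Fhat F := by
  have := sub_pos.2 hnu; have := hF.1; have := sub_nonneg.2 hF.2
  have hA : 0 < bE * F + k * (nE + dE) := by positivity
  have hgap : Mstar bE nE dE dM gs k nu Fhat F - deriv (Mstar bE nE dE dM gs k nu Fhat) F * F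
      = (1 - nu) * nE * bE ^ 2 * k * F ^ 2 * (bE * F + k * (nE + dE) + 2 * bE * (Fhat - F)) /
          (gs * dM * (bE * F + k * (nE + dE)) ^ 3) := by
    rw [(hasDerivAt_Mstar hbE hnE hdE hdM hgs hk hF.1).deriv]
    unfold Mstar
    field_simp
    ring
  have : 0 ≤ Mstar bE nE dE dM gs k nu Fhat F - deriv (Mstar bE nE dE dM gs k nu Fhat) F * F := by
    rw [hgap]; positivity
  linarith

lemma gfun_sub_eps_mul_eq (hbE : 0 < bE) (hnE : 0 < nE) (hdE : 0 < dE) (hdM : 0 < dM)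
    (hgs : 0 < gs) (hk : 0 < k) (hnu : nu < 1) {F Ms : ℝ} (hF : 0 < F) (hFhat : F ≤ Fhat)
    (hMs : 0 ≤ Ms) :
    gfun bE nE dE dM gs k nu F Ms - nu * k * bE * nE / (nE * k + Fhat * bE + dE * k) * F
      = nu * k * bE * nE / (nE * k + Fhat * bE + dE * k) * F * (bE * F / k + nE + dE) * dM * gs /
          ((1 - nu) * nE * bE * F + (bE * F / k + nE + dE) * dM * gs * Ms) *
        (Mstar bE nE dE dM gs k nu Fhat F - Ms) := by
  have := sub_pos.2 hnu
  have : 0 < (1 - nu) * nE * bE * F + (bE * F / k + nE + dE) * dM * gs * Ms := by positivity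
  have : 0 < nE * k + bE * Fhat + k * dE := by nlinarith
  have : 0 < bE * F + k * (nE + dE) := by positivity
  unfold gfun Mstar
  rw [if_pos hF]
  field_simp
  ring

lemma pifun_nonpos (hbE : 0 < bE) (hnE : 0 < nE) (hdE : 0 < dE) (hdM : 0 < dM)
    (hgs : 0 < gs) (hk : 0 < k) (hnu : nu ∈ Set.Ioo (0:ℝ) 1) {F Ms : ℝ}
    (hF : F ∈ Set.Icc 0 Fhat) (hMs : 0 ≤ Ms) :
    pifun bE nE dE dM gs k nu Fhat F Ms ≤ 0 := by
  have := hnu.1; have := sub_pos.2 hnu.2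
  rcases hF.1.eq_or_lt with rfl | hF0
  · unfold pifun; split_ifs <;> simp
  have hα : 0 < bE * F / k + nE + dE := by positivity
  have hD : 0 < (1 - nu) * nE * bE * F + (bE * F / k + nE + dE) * dM * gs * Ms := by positivity
  unfold pifun
  split_ifs with hcase
  · have hg : (fun m => gfun bE nE dE dM gs k nu F m) = fun m => nu * (1 - nu) * bE ^ 2 * nE ^ 2 *
        F ^ 2 / ((bE * F / k + nE + dE) *
          ((1 - nu) * nE * bE * F + (bE * F / k + nE + dE) * dM * gs * m)) :=
      funext fun m => if_pos hF0
    rw [hg]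
    exact mul_nonpos_of_nonpos_of_nonneg
      (deriv_const_div_mul_affine_nonpos (by positivity) hα.le (by positivity)
        (mul_pos hα hD).ne') hF0.le
  · rw [gfun_sub_eps_mul_eq hbE hnE hdE hdM hgs hk hnu.2 hF0 hF.2 hMs, mul_div_assoc,
      ← neg_sub Ms, neg_div_self (sub_ne_zero.2 hcase), mul_neg_one, neg_mul]
    have : 0 < nE * k + Fhat * bE + dE * k := by nlinarith [hF.2]
    exact neg_nonpos.2 (by positivity)

end Model

theorem stmt_17_general (bE nE dE dM dF ds gs k nu Fhat rho eta : ℝ)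
    (hbE : 0 < bE) (hnE : 0 < nE) (hdE : 0 < dE) (hdM : 0 < dM)
    (hdF : 0 < dF) (hgs : 0 < gs) (hk : 0 < k)
    (hnu : nu ∈ Set.Ioo (0:ℝ) 1)
    (hrho : 0 < rho) (heta : eta ∈ Set.Ioo dF ds) :
    ∀ F Ms : ℝ, F ∈ Set.Icc (0:ℝ) Fhat → 0 ≤ Ms →
      0 ≤ (ds - eta) * Ms + eta * Mstar bE nE dE dM gs k nu Fhat F -
        rho * pifun bE nE dE dM gs k nu Fhat F Ms +
        cut2 (deriv (Mstar bE nE dE dM gs k nu Fhat) F)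
          (gfun bE nE dE dM gs k nu F Ms - dF * F) := by
  intro F Ms hF hMs
  have hM : 0 ≤ Mstar bE nE dE dM gs k nu Fhat F := Mstar_nonneg hnE hdM hgs hk hnu.2 hF
  have hpi := pifun_nonpos hbE hnE hdE hdM hgs hk hnu hF hMs
  have hcut := neg_mul_le_cut2 (y := gfun bE nE dE dM gs k nu F Ms - dF * F) hdF.le hM
    (by linarith [gfun_nonneg hbE hnE hdE hdM hgs hk hnu (F := F) hMs])
    (deriv_Mstar_mul_le hbE hnE hdE hdM hgs hk hnu.2 hF)
  nlinarith [heta.1, heta.2, mul_nonpos_of_nonneg_of_nonpos hrho.le hpi]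

theorem stmt_17 (bE nE dE dM dF ds gs k nu Fhat rho eta : ℝ)
    (hbE : 0 < bE) (hnE : 0 < nE) (hdE : 0 < dE) (hdM : 0 < dM)
    (hdF : 0 < dF) (hds : 0 < ds) (hgs : 0 < gs) (hk : 0 < k)
    (hnu : nu ∈ Set.Ioo (0:ℝ) 1) (hFhat : 0 < Fhat)
    (hrho : 0 < rho) (heta : eta ∈ Set.Ioo dF ds) :
    ∀ F Ms : ℝ, F ∈ Set.Icc (0:ℝ) Fhat → 0 ≤ Ms →
      0 ≤ (ds - eta) * Ms + eta * Mstar bE nE dE dM gs k nu Fhat F -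
        rho * pifun bE nE dE dM gs k nu Fhat F Ms +
        cut2 (deriv (Mstar bE nE dE dM gs k nu Fhat) F)
          (gfun bE nE dE dM gs k nu F Ms - dF * F) :=
  stmt_17_general bE nE dE dM dF ds gs k nu Fhat rho eta hbE hnE hdE hdM hdF hgs hk hnu hrho heta
end
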